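/- Let n > 8. There exists a constant C > 0 (depending only on n) such that for all ε ∈ (0,1] and all x ∈ ℝⁿ with |x| ≤ 1, ∫_{|y| ≤ 1} |x - y|^{4-n} (ε² + |y|²)^{-(n-4)/2} dy ≤ C (ε² + |x|²)^{(8-n)/2}. -/

import Mathlib

set_option maxHeartbeats 1000000

open MeasureTheory Metric ENNReal

lemma dyadic_loc {u : ℝ} (hu : 1 ≤ u) : ∃ k : ℕ, (2:ℝ)^k ≤ u ∧ u < 2^(k+1) := by
  have h1 : 1 ≤ ⌊u⌋₊ := (Nat.one_le_floor_iff _).mpr hu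
  refine ⟨Nat.log 2 ⌊u⌋₊, ?_, ?_⟩
  · calc ((2:ℝ)^(Nat.log 2 ⌊u⌋₊)) = ((2^(Nat.log 2 ⌊u⌋₊) : ℕ) : ℝ) := by push_cast; ring
      _ ≤ (⌊u⌋₊ : ℝ) := by exact_mod_cast Nat.pow_log_le_self 2 (by omega)
      _ ≤ u := Nat.floor_le (by linarith)
  · have h2 : ⌊u⌋₊ < 2 ^ (Nat.log 2 ⌊u⌋₊ + 1) := Nat.lt_pow_succ_log_self (by norm_num) _
    have h3 : ⌊u⌋₊ + 1 ≤ 2 ^ (Nat.log 2 ⌊u⌋₊ + 1) := h2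
    calc u < ⌊u⌋₊ + 1 := Nat.lt_floor_add_one u
      _ ≤ ((2 ^ (Nat.log 2 ⌊u⌋₊ + 1) : ℕ) : ℝ) := by exact_mod_cast h3
      _ = _ := by push_cast; ring

lemma term_calc {R g : ℝ} (hR : 0 < R) (hg : 0 < g) (q s : ℝ) (k : ℕ) :
    (R * g ^ (k+1)) ^ q * (R * g ^ k) ^ s = R ^ (s+q) * (g ^ q * (g ^ (s+q)) ^ k) := by
  rw [← Real.rpow_natCast g k, ← Real.rpow_natCast g (k+1),
      Real.mul_rpow hR.le (Real.rpow_nonneg hg.le _),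
      Real.mul_rpow hR.le (Real.rpow_nonneg hg.le _),
      ← Real.rpow_natCast (g ^ (s+q)) k,
      ← Real.rpow_mul hg.le, ← Real.rpow_mul hg.le, ← Real.rpow_mul hg.le,
      Real.rpow_add hR, ← Real.rpow_add hg q ((s+q) * k),
      mul_mul_mul_comm, ← Real.rpow_add hg]
  rw [mul_comm (R ^ s)]
  congr 1
  push_cast
  ring

lemma ball_lint (n : ℕ) (hn : 0 < n) (q : ℝ) (hq : -(n:ℝ) < q) (hq0 : q ≤ 0) :
    ∃ C : ℝ≥0∞, C ≠ ⊤ ∧ ∀ R : ℝ, 0 < R →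
      ∫⁻ y in ball (0 : (EuclideanSpace ℝ (Fin n))) R, ENNReal.ofReal (‖y‖ ^ q)
        ≤ C * ENNReal.ofReal (R ^ ((n:ℝ) + q)) := by
  haveI : Nonempty (Fin n) := ⟨⟨0, hn⟩⟩
  set κ := volume (ball (0 : (EuclideanSpace ℝ (Fin n))) 1) with hκdef
  have hκ : κ ≠ ⊤ := measure_ball_lt_top.ne
  have h2 : (0:ℝ) < 2⁻¹ := by norm_num
  have hnq : (0:ℝ) < (n:ℝ) + q := by linarith
  set ρ : ℝ≥0∞ := ENNReal.ofReal ((2⁻¹:ℝ) ^ ((n:ℝ) + q)) with hρdef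
  have hρ : ρ < 1 := by
    rw [hρdef, ← ENNReal.ofReal_one]
    exact ENNReal.ofReal_lt_ofReal_iff_of_nonneg (Real.rpow_nonneg h2.le _) |>.mpr
      (Real.rpow_lt_one h2.le (by norm_num) hnq)
  have hρtop : (1 - ρ)⁻¹ ≠ ⊤ := by
    simp only [ne_eq, ENNReal.inv_eq_top]
    exact fun h => absurd h (by simp [tsub_eq_zero_iff_le, not_le, hρ])
  refine ⟨ENNReal.ofReal ((2⁻¹:ℝ) ^ q) * κ * (1 - ρ)⁻¹, by
      exact ENNReal.mul_ne_top (ENNReal.mul_ne_top ENNReal.ofReal_ne_top hκ) hρtop, ?_⟩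
  intro R hR
  set A : ℕ → Set ((EuclideanSpace ℝ (Fin n))) := fun k => {y | R * 2⁻¹ ^ (k+1) ≤ ‖y‖ ∧ ‖y‖ ≤ R * 2⁻¹ ^ k} with hA
  have hcov : ball (0 : (EuclideanSpace ℝ (Fin n))) R ⊆ {0} ∪ ⋃ k, A k := by
    intro y hy
    rcases eq_or_ne y 0 with rfl | hy0
    · exact Or.inl rfl
    · have hy1 : 0 < ‖y‖ := norm_pos_iff.mpr hy0
      have hy2 : ‖y‖ < R := mem_ball_zero_iff.mp hy
      obtain ⟨k, hk1, hk2⟩ := dyadic_loc (u := R / ‖y‖) ((one_le_div hy1).mpr hy2.le)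
      refine Or.inr (Set.mem_iUnion.mpr ⟨k, ?_, ?_⟩)
      · rw [inv_pow]
        rw [div_lt_iff₀ hy1] at hk2
        rw [mul_inv_le_iff₀ (by positivity)]
        linarith [hk2]
      · have h4 : ‖y‖ ≤ R / 2 ^ k := by
          rw [le_div_iff₀ (by positivity)]
          rw [le_div_iff₀ hy1] at hk1
          linarith [hk1]
        rw [inv_pow]
        simpa [div_eq_mul_inv] using h4
  calc ∫⁻ y in ball (0 : (EuclideanSpace ℝ (Fin n))) R, ENNReal.ofReal (‖y‖ ^ q)
      ≤ ∫⁻ y in ({0} ∪ ⋃ k, A k : Set ((EuclideanSpace ℝ (Fin n)))), ENNReal.ofReal (‖y‖ ^ q) :=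
        lintegral_mono_set hcov
    _ ≤ (∫⁻ y in ({0} : Set ((EuclideanSpace ℝ (Fin n)))), ENNReal.ofReal (‖y‖ ^ q))
        + ∫⁻ y in (⋃ k, A k), ENNReal.ofReal (‖y‖ ^ q) := lintegral_union_le _ _ _
    _ ≤ 0 + ∑' k, ∫⁻ y in A k, ENNReal.ofReal (‖y‖ ^ q) := by
        refine add_le_add ?_ (lintegral_iUnion_le _ _)
        rw [setLIntegral_measure_zero _ _ (measure_singleton _)]
    _ ≤ ∑' k, ENNReal.ofReal (R ^ ((n:ℝ) + q)) * (ENNReal.ofReal ((2⁻¹:ℝ) ^ q) * κ) * ρ ^ k := by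
        rw [zero_add]
        refine ENNReal.tsum_le_tsum fun k => ?_
        have hRk : (0:ℝ) < R * 2⁻¹ ^ (k+1) := by positivity
        calc ∫⁻ y in A k, ENNReal.ofReal (‖y‖ ^ q)
            ≤ ∫⁻ _ in A k, ENNReal.ofReal ((R * 2⁻¹ ^ (k+1)) ^ q) := by
              refine setLIntegral_mono measurable_const fun y hy => ?_
              exact ENNReal.ofReal_le_ofReal
                (Real.rpow_le_rpow_of_nonpos hRk hy.1 hq0)
          _ = ENNReal.ofReal ((R * 2⁻¹ ^ (k+1)) ^ q) * volume (A k) := setLIntegral_const _ _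
          _ ≤ ENNReal.ofReal ((R * 2⁻¹ ^ (k+1)) ^ q)
              * volume (closedBall (0 : (EuclideanSpace ℝ (Fin n))) (R * 2⁻¹ ^ k)) := by
              refine mul_le_mul_right (measure_mono fun y hy => ?_) _
              exact mem_closedBall_zero_iff.mpr hy.2
          _ = ENNReal.ofReal ((R * 2⁻¹ ^ (k+1)) ^ q)
              * (ENNReal.ofReal ((R * 2⁻¹ ^ k) ^ ((n:ℝ))) * κ) := by
              rw [Measure.addHaar_closedBall _ _ (by positivity)]
              congr 2
              · rw [finrank_euclideanSpace_fin, ← Real.rpow_natCast]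
          _ = ENNReal.ofReal ((R * 2⁻¹ ^ (k+1)) ^ q * (R * 2⁻¹ ^ k) ^ ((n:ℝ))) * κ := by
              rw [ENNReal.ofReal_mul (Real.rpow_nonneg (by positivity) _), mul_assoc]
          _ = ENNReal.ofReal (R ^ ((n:ℝ) + q) * ((2⁻¹:ℝ) ^ q * ((2⁻¹:ℝ) ^ ((n:ℝ)+q)) ^ k)) * κ := by
              rw [term_calc hR h2]
          _ = ENNReal.ofReal (R ^ ((n:ℝ) + q)) * (ENNReal.ofReal ((2⁻¹:ℝ) ^ q) * κ) * ρ ^ k := by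
              rw [ENNReal.ofReal_mul (Real.rpow_nonneg (by positivity) _),
                  ENNReal.ofReal_mul (Real.rpow_nonneg (by positivity) _),
                  ENNReal.ofReal_pow (Real.rpow_nonneg (by positivity) _)]
              ring
    _ = ENNReal.ofReal ((2⁻¹:ℝ) ^ q) * κ * (1 - ρ)⁻¹ * ENNReal.ofReal (R ^ ((n:ℝ) + q)) := by
        rw [ENNReal.tsum_mul_left, ENNReal.tsum_geometric]
        ring

lemma tail_lint (n : ℕ) (hn : 0 < n) (p : ℝ) (hp : (n:ℝ) + p < 0) (hp0 : p ≤ 0) :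
    ∃ C : ℝ≥0∞, C ≠ ⊤ ∧ ∀ a : ℝ, 0 < a →
      ∫⁻ y in {y : (EuclideanSpace ℝ (Fin n)) | a ≤ ‖y‖}, ENNReal.ofReal (‖y‖ ^ p)
        ≤ C * ENNReal.ofReal (a ^ ((n:ℝ) + p)) := by
  haveI : Nonempty (Fin n) := ⟨⟨0, hn⟩⟩
  set κ := volume (ball (0 : (EuclideanSpace ℝ (Fin n))) 1) with hκdef
  have hκ : κ ≠ ⊤ := measure_ball_lt_top.ne
  have h2 : (0:ℝ) < 2 := by norm_num
  set ρ : ℝ≥0∞ := ENNReal.ofReal ((2:ℝ) ^ ((n:ℝ) + p)) with hρdef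
  have hρ : ρ < 1 := by
    rw [hρdef, ← ENNReal.ofReal_one]
    exact ENNReal.ofReal_lt_ofReal_iff_of_nonneg (Real.rpow_nonneg h2.le _) |>.mpr
      (Real.rpow_lt_one_of_one_lt_of_neg (by norm_num) hp)
  have hρtop : (1 - ρ)⁻¹ ≠ ⊤ := by
    simp only [ne_eq, ENNReal.inv_eq_top]
    exact fun h => absurd h (by simp [tsub_eq_zero_iff_le, not_le, hρ])
  refine ⟨ENNReal.ofReal ((2:ℝ) ^ ((n:ℝ))) * κ * (1 - ρ)⁻¹, by
      exact ENNReal.mul_ne_top (ENNReal.mul_ne_top ENNReal.ofReal_ne_top hκ) hρtop, ?_⟩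
  intro a ha
  set B : ℕ → Set ((EuclideanSpace ℝ (Fin n))) := fun k => {y | a * 2 ^ k ≤ ‖y‖ ∧ ‖y‖ ≤ a * 2 ^ (k+1)} with hB
  have hcov : {y : (EuclideanSpace ℝ (Fin n)) | a ≤ ‖y‖} ⊆ ⋃ k, B k := by
    intro y hy
    have hy1 : 0 < ‖y‖ := lt_of_lt_of_le ha hy
    obtain ⟨k, hk1, hk2⟩ := dyadic_loc (u := ‖y‖ / a) ((one_le_div ha).mpr hy)
    rw [le_div_iff₀ ha] at hk1
    rw [div_lt_iff₀ ha] at hk2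
    exact Set.mem_iUnion.mpr ⟨k, by constructor <;> [linarith; linarith]⟩
  calc ∫⁻ y in {y : (EuclideanSpace ℝ (Fin n)) | a ≤ ‖y‖}, ENNReal.ofReal (‖y‖ ^ p)
      ≤ ∫⁻ y in (⋃ k, B k), ENNReal.ofReal (‖y‖ ^ p) := lintegral_mono_set hcov
    _ ≤ ∑' k, ∫⁻ y in B k, ENNReal.ofReal (‖y‖ ^ p) := lintegral_iUnion_le _ _
    _ ≤ ∑' k, ENNReal.ofReal (a ^ ((n:ℝ) + p)) * (ENNReal.ofReal ((2:ℝ) ^ ((n:ℝ))) * κ) * ρ ^ k := by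
        refine ENNReal.tsum_le_tsum fun k => ?_
        have hak : (0:ℝ) < a * 2 ^ k := by positivity
        calc ∫⁻ y in B k, ENNReal.ofReal (‖y‖ ^ p)
            ≤ ∫⁻ _ in B k, ENNReal.ofReal ((a * 2 ^ k) ^ p) := by
              refine setLIntegral_mono measurable_const fun y hy => ?_
              exact ENNReal.ofReal_le_ofReal
                (Real.rpow_le_rpow_of_nonpos hak hy.1 hp0)
          _ = ENNReal.ofReal ((a * 2 ^ k) ^ p) * volume (B k) := setLIntegral_const _ _
          _ ≤ ENNReal.ofReal ((a * 2 ^ k) ^ p)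
              * volume (closedBall (0 : (EuclideanSpace ℝ (Fin n))) (a * 2 ^ (k+1))) := by
              refine mul_le_mul_right (measure_mono fun y hy => ?_) _
              exact mem_closedBall_zero_iff.mpr hy.2
          _ = ENNReal.ofReal ((a * 2 ^ k) ^ p)
              * (ENNReal.ofReal ((a * 2 ^ (k+1)) ^ ((n:ℝ))) * κ) := by
              rw [Measure.addHaar_closedBall _ _ (by positivity)]
              congr 2
              · rw [finrank_euclideanSpace_fin, ← Real.rpow_natCast]
          _ = ENNReal.ofReal ((a * 2 ^ (k+1)) ^ ((n:ℝ)) * (a * 2 ^ k) ^ p) * κ := by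
              rw [ENNReal.ofReal_mul (Real.rpow_nonneg (by positivity) _), mul_assoc,
                mul_comm (ENNReal.ofReal ((a * 2 ^ k) ^ p))]
              ring
          _ = ENNReal.ofReal (a ^ ((n:ℝ) + p) * ((2:ℝ) ^ ((n:ℝ)) * ((2:ℝ) ^ ((n:ℝ)+p)) ^ k)) * κ := by
              rw [term_calc ha h2, add_comm p]
          _ = ENNReal.ofReal (a ^ ((n:ℝ) + p)) * (ENNReal.ofReal ((2:ℝ) ^ ((n:ℝ))) * κ) * ρ ^ k := by
              rw [ENNReal.ofReal_mul (Real.rpow_nonneg (by positivity) _),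
                  ENNReal.ofReal_mul (Real.rpow_nonneg (by positivity) _),
                  ENNReal.ofReal_pow (Real.rpow_nonneg (by positivity) _)]
              ring
    _ = ENNReal.ofReal ((2:ℝ) ^ ((n:ℝ))) * κ * (1 - ρ)⁻¹ * ENNReal.ofReal (a ^ ((n:ℝ) + p)) := by
        rw [ENNReal.tsum_mul_left, ENNReal.tsum_geometric]
        ring

lemma ball_shift (n : ℕ) (x : EuclideanSpace ℝ (Fin n)) (q R : ℝ) :
    ∫⁻ y in ball x R, ENNReal.ofReal (‖x - y‖ ^ q)
      = ∫⁻ y in ball (0 : EuclideanSpace ℝ (Fin n)) R, ENNReal.ofReal (‖y‖ ^ q) := by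
  have h := (measurePreserving_add_right (volume : Measure (EuclideanSpace ℝ (Fin n)))
      x).setLIntegral_comp_preimage_emb (MeasurableEquiv.addRight x).measurableEmbedding
      (fun y => ENNReal.ofReal (‖x - y‖ ^ q)) (ball x R)
  rw [← h]
  have hs : (fun y => y + x) ⁻¹' ball x R = ball (0 : EuclideanSpace ℝ (Fin n)) R := by
    ext z
    simp [mem_ball, dist_eq_norm]
  rw [show ((fun y => y + x) ⁻¹' ball x R) = ball (0 : EuclideanSpace ℝ (Fin n)) R from hs]
  refine setLIntegral_congr_fun measurableSet_ball (fun z _ => ?_)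
  congr 1
  rw [show x - (z + x) = -z by abel, norm_neg]


/-- Convolution estimate: for `n > 8` there is `C > 0` (depending only on `n`) with
`∫_{|y|≤1} |x-y|^{4-n} (ε²+|y|²)^{-(n-4)/2} dy ≤ C (ε²+|x|²)^{(8-n)/2}`
for all `ε ∈ (0,1]` and `|x| ≤ 1`. -/
theorem green_convolution_bound_high_dim (n : ℕ) (hn : 8 < n) :
    ∃ C : ℝ, 0 < C ∧ ∀ ε : ℝ, ε ∈ Set.Ioc (0 : ℝ) 1 →
      ∀ x : EuclideanSpace ℝ (Fin n), ‖x‖ ≤ 1 →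
        (∫ y in Metric.closedBall (0 : EuclideanSpace ℝ (Fin n)) 1,
            ‖x - y‖ ^ ((4 : ℝ) - n) * (ε ^ 2 + ‖y‖ ^ 2) ^ (-((n : ℝ) - 4) / 2))
          ≤ C * (ε ^ 2 + ‖x‖ ^ 2) ^ (((8 : ℝ) - n) / 2) := by
  have hn9 : (9:ℝ) ≤ (n:ℝ) := by exact_mod_cast hn
  set q : ℝ := (4:ℝ) - n with hqdef
  set σ : ℝ := (8:ℝ) - n with hσdef
  set γ : ℝ := -((n:ℝ) - 4) / 2 with hγdef
  set β : ℝ := ((8:ℝ) - n) / 2 with hβdef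
  have hq0 : q ≤ 0 := by rw [hqdef]; linarith
  have hσ0 : σ ≤ 0 := by rw [hσdef]; linarith
  have hβ0 : β ≤ 0 := by rw [hβdef]; linarith
  have hγ0 : γ ≤ 0 := by rw [hγdef]; linarith
  have hnq4 : (n:ℝ) + q = 4 := by rw [hqdef]; ring
  have hnpσ : (n:ℝ) + (q + q) = σ := by rw [hqdef, hσdef]; ring
  have hqσ : q + 4 = σ := by rw [hqdef, hσdef]; ring
  obtain ⟨C₁, hC₁, hball⟩ := ball_lint n (by omega) q (by rw [hqdef]; linarith) hq0
  obtain ⟨C₂, hC₂, htail⟩ := tail_lint n (by omega) (q + q) (by rw [hqdef]; push_cast; linarith) (by linarith)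
  set E := EuclideanSpace ℝ (Fin n)
  set K : ℝ≥0∞ := (C₁ * ENNReal.ofReal ((3:ℝ) ^ (4:ℝ))
      + C₂ * ENNReal.ofReal (((2:ℝ) ^ q)⁻¹ * (2:ℝ) ^ σ))
    + (C₁ * ENNReal.ofReal ((2⁻¹:ℝ) ^ σ) + C₁ * ENNReal.ofReal ((2⁻¹:ℝ) ^ σ)
      + C₂ * ENNReal.ofReal (((4:ℝ) ^ q)⁻¹ * (2⁻¹:ℝ) ^ σ)) with hKdef
  have hK : K ≠ ⊤ := by
    rw [hKdef]
    refine ENNReal.add_ne_top.mpr ⟨ENNReal.add_ne_top.mpr ⟨?_, ?_⟩,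
      ENNReal.add_ne_top.mpr ⟨ENNReal.add_ne_top.mpr ⟨?_, ?_⟩, ?_⟩⟩ <;>
      exact ENNReal.mul_ne_top (by assumption) ENNReal.ofReal_ne_top
  refine ⟨(K.toReal + 1) * 2 ^ (-β), by positivity, ?_⟩
  rintro ε ⟨hε0, hε1⟩ x hx
  haveI : Nonempty (Fin n) := ⟨⟨0, by omega⟩⟩
  set m : ℝ := max ε ‖x‖ with hmdef
  have hm0 : 0 < m := lt_of_lt_of_le hε0 (le_max_left _ _)
  -- pointwise weight bounds
  have sqpow : ∀ t : ℝ, 0 < t → (t^2 : ℝ) ^ γ = t ^ q := by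
    intro t ht
    rw [← Real.rpow_natCast t 2, ← Real.rpow_mul ht.le]
    congr 1
    rw [hγdef, hqdef]; push_cast; ring
  have wb1 : ∀ y : E, ((ε^2 + ‖y‖^2 : ℝ)) ^ γ ≤ ε ^ q := by
    intro y
    rw [← sqpow ε hε0]
    exact Real.rpow_le_rpow_of_nonpos (by positivity) (by nlinarith [sq_nonneg ‖y‖]) hγ0
  have wb2 : ∀ y : E, 0 < ‖y‖ → ((ε^2 + ‖y‖^2 : ℝ)) ^ γ ≤ ‖y‖ ^ q := by
    intro y hy
    rw [← sqpow _ hy]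
    exact Real.rpow_le_rpow_of_nonpos (by positivity) (by nlinarith [sq_nonneg ε]) hγ0
  -- measurability
  have hmeas1 : Measurable fun y : E => ENNReal.ofReal (‖x - y‖ ^ q) := by fun_prop
  have hmeasN : ∀ r : ℝ, Measurable fun y : E => ENNReal.ofReal (‖y‖ ^ r) := by
    intro r; fun_prop
  -- the key lintegral bound
  have key : ∫⁻ y in closedBall (0:E) 1,
      ENNReal.ofReal (‖x - y‖ ^ q) * ENNReal.ofReal ((ε^2 + ‖y‖^2 : ℝ) ^ γ)
      ≤ K * ENNReal.ofReal (m ^ σ) := by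
    rcases le_total ‖x‖ ε with hc | hc
    · -- case ‖x‖ ≤ ε, m = ε
      have hmε : m = ε := max_eq_left hc
      have hcov : closedBall (0:E) 1 ⊆ ball x (3*ε) ∪ {y : E | 2*ε ≤ ‖y‖} := by
        intro y _
        by_cases h : ‖y‖ < 2*ε
        · left
          rw [mem_ball, dist_eq_norm]
          calc ‖y - x‖ ≤ ‖y‖ + ‖x‖ := norm_sub_le _ _
            _ < 3*ε := by linarith
        · right; exact not_lt.mp h
      have b1 : ∫⁻ y in ball x (3*ε),
          ENNReal.ofReal (‖x - y‖ ^ q) * ENNReal.ofReal ((ε^2 + ‖y‖^2 : ℝ) ^ γ)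
          ≤ C₁ * ENNReal.ofReal ((3:ℝ) ^ (4:ℝ)) * ENNReal.ofReal (ε ^ σ) := by
        calc ∫⁻ y in ball x (3*ε),
            ENNReal.ofReal (‖x - y‖ ^ q) * ENNReal.ofReal ((ε^2 + ‖y‖^2 : ℝ) ^ γ)
            ≤ ∫⁻ y in ball x (3*ε), ENNReal.ofReal (‖x - y‖ ^ q) * ENNReal.ofReal (ε ^ q) := by
              refine setLIntegral_mono (hmeas1.mul_const _) fun y _ => ?_
              exact mul_le_mul_right (ENNReal.ofReal_le_ofReal (wb1 y)) _
          _ = (∫⁻ y in ball x (3*ε), ENNReal.ofReal (‖x - y‖ ^ q)) * ENNReal.ofReal (ε ^ q) :=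
              lintegral_mul_const' _ _ ENNReal.ofReal_ne_top
          _ ≤ C₁ * ENNReal.ofReal ((3*ε) ^ ((n:ℝ) + q)) * ENNReal.ofReal (ε ^ q) := by
              rw [ball_shift]
              exact mul_le_mul_left (hball (3*ε) (by linarith)) _
          _ = C₁ * ENNReal.ofReal ((3:ℝ) ^ (4:ℝ)) * ENNReal.ofReal (ε ^ σ) := by
              rw [hnq4, Real.mul_rpow (by norm_num) hε0.le,
                ENNReal.ofReal_mul (by positivity), ← hqσ, Real.rpow_add hε0]
              rw [ENNReal.ofReal_mul (by positivity)]
              ring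
      have b2 : ∫⁻ y in {y : E | 2*ε ≤ ‖y‖},
          ENNReal.ofReal (‖x - y‖ ^ q) * ENNReal.ofReal ((ε^2 + ‖y‖^2 : ℝ) ^ γ)
          ≤ C₂ * ENNReal.ofReal (((2:ℝ) ^ q)⁻¹ * (2:ℝ) ^ σ) * ENNReal.ofReal (ε ^ σ) := by
        calc ∫⁻ y in {y : E | 2*ε ≤ ‖y‖},
            ENNReal.ofReal (‖x - y‖ ^ q) * ENNReal.ofReal ((ε^2 + ‖y‖^2 : ℝ) ^ γ)
            ≤ ∫⁻ y in {y : E | 2*ε ≤ ‖y‖},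
              ENNReal.ofReal (((2:ℝ) ^ q)⁻¹) * ENNReal.ofReal (‖y‖ ^ (q+q)) := by
              refine setLIntegral_mono (measurable_const.mul (hmeasN _)) fun y hy => ?_
              have hy' : 2*ε ≤ ‖y‖ := hy
              have hy0 : 0 < ‖y‖ := lt_of_lt_of_le (by linarith) hy'
              have h1 : ‖y‖/2 ≤ ‖x - y‖ := by
                have := norm_sub_norm_le y x
                rw [norm_sub_rev y x] at this
                linarith
              have h2 : ‖x - y‖ ^ q ≤ (‖y‖/2) ^ q :=
                Real.rpow_le_rpow_of_nonpos (by positivity) h1 hq0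
              calc ENNReal.ofReal (‖x - y‖ ^ q) * ENNReal.ofReal ((ε^2 + ‖y‖^2 : ℝ) ^ γ)
                  ≤ ENNReal.ofReal ((‖y‖/2) ^ q) * ENNReal.ofReal (‖y‖ ^ q) :=
                    mul_le_mul' (ENNReal.ofReal_le_ofReal h2)
                      (ENNReal.ofReal_le_ofReal (wb2 y hy0))
                _ = ENNReal.ofReal (((2:ℝ) ^ q)⁻¹) * ENNReal.ofReal (‖y‖ ^ (q+q)) := by
                    rw [← ENNReal.ofReal_mul (by positivity), ← ENNReal.ofReal_mul (by positivity)]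
                    congr 1
                    rw [Real.div_rpow (norm_nonneg _) (by norm_num), Real.rpow_add hy0,
                      div_eq_mul_inv]
                    ring
          _ = ENNReal.ofReal (((2:ℝ) ^ q)⁻¹)
              * ∫⁻ y in {y : E | 2*ε ≤ ‖y‖}, ENNReal.ofReal (‖y‖ ^ (q+q)) :=
              lintegral_const_mul' _ _ ENNReal.ofReal_ne_top
          _ ≤ ENNReal.ofReal (((2:ℝ) ^ q)⁻¹) * (C₂ * ENNReal.ofReal ((2*ε) ^ ((n:ℝ) + (q+q)))) :=
              mul_le_mul_right (htail (2*ε) (by linarith)) _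
          _ = C₂ * ENNReal.ofReal (((2:ℝ) ^ q)⁻¹ * (2:ℝ) ^ σ) * ENNReal.ofReal (ε ^ σ) := by
              rw [hnpσ, Real.mul_rpow (by norm_num) hε0.le,
                ENNReal.ofReal_mul (by positivity),
                ENNReal.ofReal_mul (by positivity)]
              ring
      calc ∫⁻ y in closedBall (0:E) 1,
          ENNReal.ofReal (‖x - y‖ ^ q) * ENNReal.ofReal ((ε^2 + ‖y‖^2 : ℝ) ^ γ)
          ≤ ∫⁻ y in (ball x (3*ε) ∪ {y : E | 2*ε ≤ ‖y‖}),
            ENNReal.ofReal (‖x - y‖ ^ q) * ENNReal.ofReal ((ε^2 + ‖y‖^2 : ℝ) ^ γ) :=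
            lintegral_mono_set hcov
        _ ≤ (∫⁻ y in ball x (3*ε),
              ENNReal.ofReal (‖x - y‖ ^ q) * ENNReal.ofReal ((ε^2 + ‖y‖^2 : ℝ) ^ γ))
            + ∫⁻ y in {y : E | 2*ε ≤ ‖y‖},
              ENNReal.ofReal (‖x - y‖ ^ q) * ENNReal.ofReal ((ε^2 + ‖y‖^2 : ℝ) ^ γ) :=
            lintegral_union_le _ _ _
        _ ≤ (C₁ * ENNReal.ofReal ((3:ℝ) ^ (4:ℝ))
              + C₂ * ENNReal.ofReal (((2:ℝ) ^ q)⁻¹ * (2:ℝ) ^ σ)) * ENNReal.ofReal (ε ^ σ) := by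
            rw [add_mul]
            exact add_le_add b1 b2
        _ ≤ K * ENNReal.ofReal (m ^ σ) := by
            rw [hmε]
            exact mul_le_mul_left le_self_add _
    · -- case ε ≤ ‖x‖, m = ‖x‖
      have hmX : m = ‖x‖ := max_eq_right hc
      have hX0 : 0 < ‖x‖ := lt_of_lt_of_le hε0 hc
      set X := ‖x‖ with hXdef
      set P3 : Set E := {y | X/2 ≤ ‖y‖ ∧ X/2 ≤ ‖x - y‖} with hP3def
      have hcov : closedBall (0:E) 1 ⊆ ball (0:E) (X/2) ∪ (ball x (X/2) ∪ P3) := by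
        intro y _
        by_cases h1 : ‖y‖ < X/2
        · exact Or.inl (mem_ball_zero_iff.mpr h1)
        · by_cases h2 : ‖x - y‖ < X/2
          · refine Or.inr (Or.inl ?_)
            rw [mem_ball, dist_eq_norm, norm_sub_rev]
            exact h2
          · exact Or.inr (Or.inr ⟨not_lt.mp h1, not_lt.mp h2⟩)
      have hae0 : ∀ᵐ (y : E) ∂(volume : Measure E), y ≠ 0 := by
        rw [ae_iff]
        simpa using measure_singleton (0 : E)
      have b1 : ∫⁻ y in ball (0:E) (X/2),
          ENNReal.ofReal (‖x - y‖ ^ q) * ENNReal.ofReal ((ε^2 + ‖y‖^2 : ℝ) ^ γ)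
          ≤ C₁ * ENNReal.ofReal ((2⁻¹:ℝ) ^ σ) * ENNReal.ofReal (X ^ σ) := by
        calc ∫⁻ y in ball (0:E) (X/2),
            ENNReal.ofReal (‖x - y‖ ^ q) * ENNReal.ofReal ((ε^2 + ‖y‖^2 : ℝ) ^ γ)
            ≤ ∫⁻ y in ball (0:E) (X/2),
              ENNReal.ofReal ((X/2) ^ q) * ENNReal.ofReal (‖y‖ ^ q) := by
              refine lintegral_mono_ae ?_
              rw [ae_restrict_iff' measurableSet_ball]
              filter_upwards [hae0] with y hy0 hymem
              have hy1 : 0 < ‖y‖ := norm_pos_iff.mpr hy0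
              have hy2 : ‖y‖ < X/2 := mem_ball_zero_iff.mp hymem
              have h1 : X/2 ≤ ‖x - y‖ := by
                have := norm_sub_norm_le x y
                linarith
              exact mul_le_mul'
                (ENNReal.ofReal_le_ofReal (Real.rpow_le_rpow_of_nonpos (by positivity) h1 hq0))
                (ENNReal.ofReal_le_ofReal (wb2 y hy1))
          _ = ENNReal.ofReal ((X/2) ^ q)
              * ∫⁻ y in ball (0:E) (X/2), ENNReal.ofReal (‖y‖ ^ q) :=
              lintegral_const_mul' _ _ ENNReal.ofReal_ne_top
          _ ≤ ENNReal.ofReal ((X/2) ^ q) * (C₁ * ENNReal.ofReal ((X/2) ^ ((n:ℝ) + q))) :=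
              mul_le_mul_right (hball (X/2) (by linarith)) _
          _ = C₁ * ENNReal.ofReal ((2⁻¹:ℝ) ^ σ) * ENNReal.ofReal (X ^ σ) := by
              rw [hnq4]
              have hXq : ((X/2:ℝ)) ^ q * (X/2) ^ (4:ℝ) = (2⁻¹:ℝ) ^ σ * X ^ σ := by
                rw [← Real.rpow_add (by positivity : (0:ℝ) < X/2), hqσ,
                  show (X/2 : ℝ) = X * 2⁻¹ by ring,
                  Real.mul_rpow hX0.le (by norm_num)]
                ring
              calc ENNReal.ofReal ((X/2) ^ q) * (C₁ * ENNReal.ofReal ((X/2) ^ (4:ℝ)))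
                  = C₁ * (ENNReal.ofReal ((X/2) ^ q) * ENNReal.ofReal ((X/2) ^ (4:ℝ))) := by ring
                _ = C₁ * ENNReal.ofReal ((X/2) ^ q * (X/2) ^ (4:ℝ)) := by
                    rw [← ENNReal.ofReal_mul (by positivity)]
                _ = C₁ * ENNReal.ofReal ((2⁻¹:ℝ) ^ σ * X ^ σ) := by rw [hXq]
                _ = C₁ * ENNReal.ofReal ((2⁻¹:ℝ) ^ σ) * ENNReal.ofReal (X ^ σ) := by
                    rw [ENNReal.ofReal_mul (by positivity)]
                    ring
      have b2 : ∫⁻ y in ball x (X/2),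
          ENNReal.ofReal (‖x - y‖ ^ q) * ENNReal.ofReal ((ε^2 + ‖y‖^2 : ℝ) ^ γ)
          ≤ C₁ * ENNReal.ofReal ((2⁻¹:ℝ) ^ σ) * ENNReal.ofReal (X ^ σ) := by
        calc ∫⁻ y in ball x (X/2),
            ENNReal.ofReal (‖x - y‖ ^ q) * ENNReal.ofReal ((ε^2 + ‖y‖^2 : ℝ) ^ γ)
            ≤ ∫⁻ y in ball x (X/2),
              ENNReal.ofReal (‖x - y‖ ^ q) * ENNReal.ofReal ((X/2) ^ q) := by
              refine setLIntegral_mono (hmeas1.mul_const _) fun y hy => ?_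
              have hxy : ‖x - y‖ < X/2 := by
                have := mem_ball.mp hy
                rwa [dist_eq_norm, norm_sub_rev] at this
              have hy1 : X/2 ≤ ‖y‖ := by
                have := norm_sub_norm_le x y
                linarith
              have hy0 : 0 < ‖y‖ := lt_of_lt_of_le (by positivity) hy1
              refine mul_le_mul_right (ENNReal.ofReal_le_ofReal ?_) _
              calc ((ε^2 + ‖y‖^2 : ℝ)) ^ γ ≤ ‖y‖ ^ q := wb2 y hy0
                _ ≤ (X/2) ^ q := Real.rpow_le_rpow_of_nonpos (by positivity) hy1 hq0
          _ = (∫⁻ y in ball x (X/2), ENNReal.ofReal (‖x - y‖ ^ q)) * ENNReal.ofReal ((X/2) ^ q) :=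
              lintegral_mul_const' _ _ ENNReal.ofReal_ne_top
          _ ≤ C₁ * ENNReal.ofReal ((X/2) ^ ((n:ℝ) + q)) * ENNReal.ofReal ((X/2) ^ q) := by
              rw [ball_shift]
              exact mul_le_mul_left (hball (X/2) (by linarith)) _
          _ = C₁ * ENNReal.ofReal ((2⁻¹:ℝ) ^ σ) * ENNReal.ofReal (X ^ σ) := by
              rw [hnq4]
              have hXq : ((X/2:ℝ)) ^ (4:ℝ) * (X/2) ^ q = (2⁻¹:ℝ) ^ σ * X ^ σ := by
                rw [← Real.rpow_add (by positivity : (0:ℝ) < X/2),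
                  show (4:ℝ) + q = σ by linarith [hqσ],
                  show (X/2 : ℝ) = X * 2⁻¹ by ring,
                  Real.mul_rpow hX0.le (by norm_num)]
                ring
              calc C₁ * ENNReal.ofReal ((X/2) ^ (4:ℝ)) * ENNReal.ofReal ((X/2) ^ q)
                  = C₁ * (ENNReal.ofReal ((X/2) ^ (4:ℝ)) * ENNReal.ofReal ((X/2) ^ q)) := by ring
                _ = C₁ * ENNReal.ofReal ((X/2) ^ (4:ℝ) * (X/2) ^ q) := by
                    rw [← ENNReal.ofReal_mul (by positivity)]
                _ = C₁ * ENNReal.ofReal ((2⁻¹:ℝ) ^ σ * X ^ σ) := by rw [hXq]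
                _ = C₁ * ENNReal.ofReal ((2⁻¹:ℝ) ^ σ) * ENNReal.ofReal (X ^ σ) := by
                    rw [ENNReal.ofReal_mul (by positivity)]
                    ring
      have b3 : ∫⁻ y in P3,
          ENNReal.ofReal (‖x - y‖ ^ q) * ENNReal.ofReal ((ε^2 + ‖y‖^2 : ℝ) ^ γ)
          ≤ C₂ * ENNReal.ofReal (((4:ℝ) ^ q)⁻¹ * (2⁻¹:ℝ) ^ σ) * ENNReal.ofReal (X ^ σ) := by
        calc ∫⁻ y in P3,
            ENNReal.ofReal (‖x - y‖ ^ q) * ENNReal.ofReal ((ε^2 + ‖y‖^2 : ℝ) ^ γ)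
            ≤ ∫⁻ y in P3,
              ENNReal.ofReal (((4:ℝ) ^ q)⁻¹) * ENNReal.ofReal (‖y‖ ^ (q+q)) := by
              refine setLIntegral_mono (measurable_const.mul (hmeasN _)) fun y hy => ?_
              obtain ⟨hyX, hxy⟩ := hy
              have hy0 : 0 < ‖y‖ := lt_of_lt_of_le (by positivity) hyX
              have h1 : ‖y‖/4 ≤ ‖x - y‖ := by
                rcases le_total ‖y‖ (2*X) with h | h
                · linarith
                · have := norm_sub_norm_le y x
                  rw [norm_sub_rev y x] at this
                  linarith
              have h2 : ‖x - y‖ ^ q ≤ (‖y‖/4) ^ q :=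
                Real.rpow_le_rpow_of_nonpos (by positivity) h1 hq0
              calc ENNReal.ofReal (‖x - y‖ ^ q) * ENNReal.ofReal ((ε^2 + ‖y‖^2 : ℝ) ^ γ)
                  ≤ ENNReal.ofReal ((‖y‖/4) ^ q) * ENNReal.ofReal (‖y‖ ^ q) :=
                    mul_le_mul' (ENNReal.ofReal_le_ofReal h2)
                      (ENNReal.ofReal_le_ofReal (wb2 y hy0))
                _ = ENNReal.ofReal (((4:ℝ) ^ q)⁻¹) * ENNReal.ofReal (‖y‖ ^ (q+q)) := by
                    rw [← ENNReal.ofReal_mul (by positivity), ← ENNReal.ofReal_mul (by positivity)]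
                    congr 1
                    rw [Real.div_rpow (norm_nonneg _) (by norm_num), Real.rpow_add hy0,
                      div_eq_mul_inv]
                    ring
          _ = ENNReal.ofReal (((4:ℝ) ^ q)⁻¹)
              * ∫⁻ y in P3, ENNReal.ofReal (‖y‖ ^ (q+q)) :=
              lintegral_const_mul' _ _ ENNReal.ofReal_ne_top
          _ ≤ ENNReal.ofReal (((4:ℝ) ^ q)⁻¹)
              * ∫⁻ y in {y : E | X/2 ≤ ‖y‖}, ENNReal.ofReal (‖y‖ ^ (q+q)) :=
              mul_le_mul_right (lintegral_mono_set fun y hy => hy.1) _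
          _ ≤ ENNReal.ofReal (((4:ℝ) ^ q)⁻¹)
              * (C₂ * ENNReal.ofReal ((X/2) ^ ((n:ℝ) + (q+q)))) :=
              mul_le_mul_right (htail (X/2) (by linarith)) _
          _ = C₂ * ENNReal.ofReal (((4:ℝ) ^ q)⁻¹ * (2⁻¹:ℝ) ^ σ) * ENNReal.ofReal (X ^ σ) := by
              rw [hnpσ, show (X/2 : ℝ) = X * 2⁻¹ by ring,
                Real.mul_rpow hX0.le (by norm_num),
                ENNReal.ofReal_mul (by positivity),
                ENNReal.ofReal_mul (by positivity)]
              ring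
      calc ∫⁻ y in closedBall (0:E) 1,
          ENNReal.ofReal (‖x - y‖ ^ q) * ENNReal.ofReal ((ε^2 + ‖y‖^2 : ℝ) ^ γ)
          ≤ ∫⁻ y in (ball (0:E) (X/2) ∪ (ball x (X/2) ∪ P3)),
            ENNReal.ofReal (‖x - y‖ ^ q) * ENNReal.ofReal ((ε^2 + ‖y‖^2 : ℝ) ^ γ) :=
            lintegral_mono_set hcov
        _ ≤ (∫⁻ y in ball (0:E) (X/2),
              ENNReal.ofReal (‖x - y‖ ^ q) * ENNReal.ofReal ((ε^2 + ‖y‖^2 : ℝ) ^ γ))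
            + ((∫⁻ y in ball x (X/2),
              ENNReal.ofReal (‖x - y‖ ^ q) * ENNReal.ofReal ((ε^2 + ‖y‖^2 : ℝ) ^ γ))
            + ∫⁻ y in P3,
              ENNReal.ofReal (‖x - y‖ ^ q) * ENNReal.ofReal ((ε^2 + ‖y‖^2 : ℝ) ^ γ)) := by
            refine le_trans (lintegral_union_le _ _ _) ?_
            exact add_le_add le_rfl (lintegral_union_le _ _ _)
        _ ≤ (C₁ * ENNReal.ofReal ((2⁻¹:ℝ) ^ σ) + (C₁ * ENNReal.ofReal ((2⁻¹:ℝ) ^ σ)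
              + C₂ * ENNReal.ofReal (((4:ℝ) ^ q)⁻¹ * (2⁻¹:ℝ) ^ σ))) * ENNReal.ofReal (X ^ σ) := by
            rw [add_mul, add_mul]
            exact add_le_add b1 (add_le_add b2 b3)
        _ ≤ K * ENNReal.ofReal (m ^ σ) := by
            rw [hmX, hKdef, ← add_assoc (C₁ * ENNReal.ofReal ((2⁻¹:ℝ) ^ σ))]
            exact mul_le_mul_left le_add_self _
  -- convert Bochner integral to lintegral
  have hnn : (fun _ : E => (0:ℝ)) ≤ᶠ[ae (volume.restrict (closedBall (0:E) 1))]
      fun y => ‖x - y‖ ^ q * ((ε^2 + ‖y‖^2 : ℝ)) ^ γ :=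
    Filter.Eventually.of_forall fun y => by positivity
  have hmeasf : AEStronglyMeasurable (fun y : E => ‖x - y‖ ^ q * ((ε^2 + ‖y‖^2 : ℝ)) ^ γ)
      (volume.restrict (closedBall (0:E) 1)) := by
    refine Measurable.aestronglyMeasurable (by fun_prop)
  rw [show (∫ y in closedBall (0:E) 1, ‖x - y‖ ^ q * ((ε^2 + ‖y‖^2 : ℝ)) ^ γ)
      = (∫⁻ y in closedBall (0:E) 1,
          ENNReal.ofReal (‖x - y‖ ^ q * ((ε^2 + ‖y‖^2 : ℝ)) ^ γ)).toReal from
    integral_eq_lintegral_of_nonneg_ae hnn hmeasf]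
  refine ENNReal.toReal_le_of_le_ofReal (by positivity) ?_
  have hsplit : ∀ y : E, ENNReal.ofReal (‖x - y‖ ^ q * ((ε^2 + ‖y‖^2 : ℝ)) ^ γ)
      = ENNReal.ofReal (‖x - y‖ ^ q) * ENNReal.ofReal ((ε^2 + ‖y‖^2 : ℝ) ^ γ) :=
    fun y => ENNReal.ofReal_mul (Real.rpow_nonneg (norm_nonneg _) _)
  rw [lintegral_congr fun y => hsplit y]
  refine le_trans key ?_
  -- final: K * ofReal (m ^ σ) ≤ ofReal ((K.toReal + 1) * 2 ^ (-β) * (ε^2 + ‖x‖^2) ^ β)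
  have hKm : K * ENNReal.ofReal (m ^ σ) = ENNReal.ofReal (K.toReal * m ^ σ) := by
    conv_lhs => rw [← ENNReal.ofReal_toReal hK]
    rw [← ENNReal.ofReal_mul ENNReal.toReal_nonneg]
  rw [hKm]
  apply ENNReal.ofReal_le_ofReal
  have hr0 : (0:ℝ) < ε^2 + ‖x‖^2 := by positivity
  have hr2 : ε^2 + ‖x‖^2 ≤ 2 * m^2 := by
    have h1 : ε ≤ m := le_max_left _ _
    have h2 : ‖x‖ ≤ m := le_max_right _ _
    nlinarith [norm_nonneg x, hε0.le]
  have hσβ : σ = 2 * β := by rw [hσdef, hβdef]; ring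
  have h5 : (2:ℝ) ^ β * m ^ σ ≤ (ε^2 + ‖x‖^2) ^ β := by
    have h6 : ((2 * m^2 : ℝ)) ^ β ≤ (ε^2 + ‖x‖^2) ^ β :=
      Real.rpow_le_rpow_of_nonpos hr0 hr2 hβ0
    have hmσ : (m:ℝ) ^ σ = (m^2) ^ β := by
      rw [← Real.rpow_natCast m 2, ← Real.rpow_mul hm0.le, hσβ]
      norm_num
    calc (2:ℝ) ^ β * m ^ σ = (2 * m^2 : ℝ) ^ β := by
          rw [Real.mul_rpow (by norm_num) (by positivity), hmσ]
      _ ≤ _ := h6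
  have h2β : (0:ℝ) < (2:ℝ) ^ β := Real.rpow_pos_of_pos (by norm_num) _
  calc K.toReal * m ^ σ ≤ (K.toReal + 1) * m ^ σ := by
        have := Real.rpow_nonneg hm0.le σ
        nlinarith
    _ = (K.toReal + 1) * 2 ^ (-β) * ((2:ℝ) ^ β * m ^ σ) := by
        rw [Real.rpow_neg (by norm_num)]
        field_simp
    _ ≤ (K.toReal + 1) * 2 ^ (-β) * (ε^2 + ‖x‖^2) ^ β := by
        refine mul_le_mul_of_nonneg_left h5 ?_
        have := ENNReal.toReal_nonneg (a := K)
        positivity
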